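/- For each a > 0 there exist ε₀ > 0 and a continuous function v : [0, ε₀] → ℝ with v(0) = 0, v(t)/t → a as t → 0⁺, v twice differentiable on (0, ε₀] with v''(t) + h(t) f(v(t)) = 0 for all t ∈ (0, ε₀], and (a/2) t ≤ v(t) ≤ (3a/2) t on [0, ε₀]. Moreover v is the unique such function on [0, ε₀] obtained as the fixed point v = t w of the map T(w)(t) = a - (1/t) ∫₀ᵗ ∫₀ˢ h(x)( (x w(x))^{-q} + g₁(x w(x)) ) dx ds on {w ∈ C[0, ε₀] : w(0) = a, ‖w - a‖_∞ ≤ a/2}. -/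

import Mathlib

/-!
Writing `v = t w`, the problem `v'' + h f(v) = 0`, `v(0) = 0`, `v'(0) = a` becomes the fixed-point
equation `w = T w` with `T w (t) = a - t⁻¹ ∫₀ᵗ ∫₀ˢ h(x) f(x w(x)) dx ds`, and
`f(v) = v^(-q) + g₁(v)` for `v > 0`. The upper bound on `K` gives `|h(x)| ≤ c x^γ` with
`γ - q > -1`, so on the ball `|w - a| ≤ a / 2` the integrand is `O(x^(γ - q))`, integrable at `0`,
and `|T w (t) - a| = O(t^(γ - q + 1))`. Since `y ↦ y^(-q)` is Lipschitz away from `0` and `g₁` is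
Lipschitz near `0`, the same computation bounds `|T w - T w'|` by `O(ε^(γ - q + 1)) ‖w - w'‖`,
so for small `ε` the map `T` is a contraction of the ball in `C([0, ε])`.
-/

open Real Set Filter MeasureTheory Topology

noncomputable def primitiveFromZero (F : ℝ → ℝ) (t : ℝ) : ℝ := ∫ x in Ioo 0 t, F x

theorem primitiveFromZero_eq_intervalIntegral (F : ℝ → ℝ) {t : ℝ} (ht : 0 ≤ t) :
    primitiveFromZero F t = ∫ x in (0 : ℝ)..t, F x := by
  rw [primitiveFromZero, intervalIntegral.integral_of_le ht, integral_Ioc_eq_integral_Ioo]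

section PowerBound

variable {F : ℝ → ℝ} {η C r t : ℝ}

theorem integrableOn_Ioo_of_abs_le_rpow (hr : -1 < r) (hF : ContinuousOn F (Ioo 0 η))
    (hFC : ∀ x ∈ Ioo 0 η, |F x| ≤ C * x ^ r) (ht : t ≤ η) :
    IntegrableOn F (Ioo 0 t) := by
  rcases le_total t 0 with ht0 | ht0
  · simp [Ioo_eq_empty_of_le ht0]
  have hpow : IntegrableOn (fun x : ℝ => C * x ^ r) (Ioo 0 t) :=
    ((intervalIntegrable_iff_integrableOn_Ioo_of_le (f := fun x : ℝ => x ^ r) ht0).1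
      (intervalIntegral.intervalIntegrable_rpow' hr)).const_mul C
  refine hpow.mono' ((hF.mono (Ioo_subset_Ioo_right ht)).aestronglyMeasurable measurableSet_Ioo) ?_
  filter_upwards [ae_restrict_mem measurableSet_Ioo] with x hx
  exact hFC x (Ioo_subset_Ioo_right ht hx)

theorem abs_primitiveFromZero_le (hr : -1 < r) (hFC : ∀ x ∈ Ioo 0 η, |F x| ≤ C * x ^ r)
    (ht : t ∈ Icc 0 η) :
    |primitiveFromZero F t| ≤ C / (r + 1) * t ^ (r + 1) := by
  have hpow : IntervalIntegrable (fun x : ℝ => C * x ^ r) volume 0 t :=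
    (intervalIntegral.intervalIntegrable_rpow' hr).const_mul C
  calc |primitiveFromZero F t| ≤ primitiveFromZero (fun x => C * x ^ r) t := by
        refine MeasureTheory.norm_integral_le_of_norm_le (f := F)
          ((intervalIntegrable_iff_integrableOn_Ioo_of_le ht.1).1 hpow) ?_
        filter_upwards [ae_restrict_mem measurableSet_Ioo] with x hx
        exact hFC x (Ioo_subset_Ioo_right ht.2 hx)
    _ = C / (r + 1) * t ^ (r + 1) := by
        rw [primitiveFromZero_eq_intervalIntegral _ ht.1, intervalIntegral.integral_const_mul,
          integral_rpow (Or.inl hr), Real.zero_rpow (by linarith)]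
        ring

theorem continuousOn_primitiveFromZero (hr : -1 < r) (hF : ContinuousOn F (Ioo 0 η))
    (hFC : ∀ x ∈ Ioo 0 η, |F x| ≤ C * x ^ r) :
    ContinuousOn (primitiveFromZero F) (Icc 0 η) := by
  have hint : IntegrableOn F (Icc 0 η) :=
    (integrableOn_Icc_iff_integrableOn_Ioo (f := F)).2
      (integrableOn_Ioo_of_abs_le_rpow hr hF hFC le_rfl)
  refine (intervalIntegral.continuousOn_primitive hint).congr fun s _ => ?_
  exact integral_Ioc_eq_integral_Ioo.symm

theorem hasDerivAt_primitiveFromZero (hr : -1 < r) (hF : ContinuousOn F (Ioo 0 η))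
    (hFC : ∀ x ∈ Ioo 0 η, |F x| ≤ C * x ^ r) (ht : t ∈ Ioo 0 η) :
    HasDerivAt (primitiveFromZero F) (F t) t := by
  have hJ : HasDerivAt (fun u => ∫ x in (0 : ℝ)..u, F x) (F t) t :=
    intervalIntegral.integral_hasDerivAt_right
      ((intervalIntegrable_iff_integrableOn_Ioo_of_le (f := F) ht.1.le).2
        (integrableOn_Ioo_of_abs_le_rpow hr hF hFC ht.2.le))
      (hF.stronglyMeasurableAtFilter isOpen_Ioo t ht)
      (hF.continuousAt (isOpen_Ioo.mem_nhds ht))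
  refine hJ.congr_of_eventuallyEq ?_
  filter_upwards [Ioi_mem_nhds ht.1] with s hs
  exact primitiveFromZero_eq_intervalIntegral F (le_of_lt hs)

end PowerBound

noncomputable def averagedDoublePrimitive (F : ℝ → ℝ) (t : ℝ) : ℝ :=
  1 / t * primitiveFromZero (primitiveFromZero F) t

section DoublePrimitive

variable {F F' : ℝ → ℝ} {η C C' r t : ℝ}

theorem abs_primitiveFromZero_primitiveFromZero_le (hr : -1 < r)
    (hFC : ∀ x ∈ Ioo 0 η, |F x| ≤ C * x ^ r) (ht : t ∈ Icc 0 η) :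
    |primitiveFromZero (primitiveFromZero F) t| ≤ C / ((r + 1) * (r + 2)) * t ^ (r + 2) := by
  have h := abs_primitiveFromZero_le (F := primitiveFromZero F) (by linarith : -1 < r + 1)
    (fun x hx => abs_primitiveFromZero_le hr hFC (Ioo_subset_Icc_self hx)) ht
  rw [div_div, show r + 1 + 1 = r + 2 by ring] at h
  exact h

theorem abs_averagedDoublePrimitive_le (hr : -1 < r)
    (hFC : ∀ x ∈ Ioo 0 η, |F x| ≤ C * x ^ r) (ht : t ∈ Icc 0 η) :
    |averagedDoublePrimitive F t| ≤ C / ((r + 1) * (r + 2)) * t ^ (r + 1) := by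
  rcases ht.1.eq_or_lt with rfl | ht0
  · simp [averagedDoublePrimitive, Real.zero_rpow (by linarith : r + 1 ≠ 0)]
  rw [averagedDoublePrimitive, abs_mul, abs_of_pos (one_div_pos.2 ht0)]
  calc 1 / t * |primitiveFromZero (primitiveFromZero F) t|
      ≤ 1 / t * (C / ((r + 1) * (r + 2)) * t ^ (r + 2)) := by
        gcongr; exact abs_primitiveFromZero_primitiveFromZero_le hr hFC ht
    _ = C / ((r + 1) * (r + 2)) * t ^ (r + 1) := by
        rw [show r + 2 = (r + 1) + 1 by ring, Real.rpow_add_one ht0.ne']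
        field_simp

theorem continuousOn_averagedDoublePrimitive (hr : -1 < r) (hF : ContinuousOn F (Ioo 0 η))
    (hFC : ∀ x ∈ Ioo 0 η, |F x| ≤ C * x ^ r) :
    ContinuousOn (averagedDoublePrimitive F) (Icc 0 η) := by
  have hprim : ContinuousOn (primitiveFromZero (primitiveFromZero F)) (Icc 0 η) :=
    continuousOn_primitiveFromZero (by linarith : -1 < r + 1)
      ((continuousOn_primitiveFromZero hr hF hFC).mono Ioo_subset_Icc_self)
      (fun x hx => abs_primitiveFromZero_le hr hFC (Ioo_subset_Icc_self hx))
  intro t ht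
  rcases ht.1.eq_or_lt with rfl | ht0
  · have hlim : Tendsto (fun s : ℝ => C / ((r + 1) * (r + 2)) * s ^ (r + 1)) (𝓝[Icc 0 η] 0)
        (𝓝 0) := by
      have := ((continuous_rpow_const (by linarith : 0 ≤ r + 1)).tendsto 0).const_mul
        (C / ((r + 1) * (r + 2)))
      rw [Real.zero_rpow (by linarith), mul_zero] at this
      exact this.mono_left nhdsWithin_le_nhds
    have h0 : averagedDoublePrimitive F 0 = 0 := by simp [averagedDoublePrimitive]
    rw [ContinuousWithinAt, h0]
    refine squeeze_zero_norm' ?_ hlim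
    filter_upwards [self_mem_nhdsWithin] with s hs
    exact abs_averagedDoublePrimitive_le hr hFC hs
  · exact ((continuousAt_const.div continuousAt_id ht0.ne').continuousWithinAt).mul (hprim t ht)

theorem averagedDoublePrimitive_sub (hr : -1 < r) (hF : ContinuousOn F (Ioo 0 η))
    (hFC : ∀ x ∈ Ioo 0 η, |F x| ≤ C * x ^ r) (hF' : ContinuousOn F' (Ioo 0 η))
    (hF'C : ∀ x ∈ Ioo 0 η, |F' x| ≤ C' * x ^ r) (ht : t ≤ η) :
    averagedDoublePrimitive F t - averagedDoublePrimitive F' t =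
      averagedDoublePrimitive (fun x => F x - F' x) t := by
  have hint : ∀ {G : ℝ → ℝ} {D : ℝ}, ContinuousOn G (Ioo 0 η) →
      (∀ x ∈ Ioo 0 η, |G x| ≤ D * x ^ r) → IntegrableOn (primitiveFromZero G) (Ioo 0 t) :=
    fun hG hGD => integrableOn_Ioo_of_abs_le_rpow (by linarith : -1 < r + 1)
      ((continuousOn_primitiveFromZero hr hG hGD).mono Ioo_subset_Icc_self)
      (fun x hx => abs_primitiveFromZero_le hr hGD (Ioo_subset_Icc_self hx)) ht
  rw [averagedDoublePrimitive, averagedDoublePrimitive, averagedDoublePrimitive, ← mul_sub,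
    primitiveFromZero, primitiveFromZero, ← integral_sub (hint hF hFC) (hint hF' hF'C)]
  congr 1
  refine setIntegral_congr_fun measurableSet_Ioo fun s hs => (integral_sub ?_ ?_).symm
  · exact integrableOn_Ioo_of_abs_le_rpow hr hF hFC (hs.2.le.trans ht)
  · exact integrableOn_Ioo_of_abs_le_rpow hr hF' hF'C (hs.2.le.trans ht)

theorem hasDerivAt_linear_sub_primitiveFromZero_primitiveFromZero (a : ℝ) (hr : -1 < r)
    (hF : ContinuousOn F (Ioo 0 η)) (hFC : ∀ x ∈ Ioo 0 η, |F x| ≤ C * x ^ r) (ht : t ∈ Ioo 0 η) :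
    HasDerivAt (fun s => a * s - primitiveFromZero (primitiveFromZero F) s)
        (a - primitiveFromZero F t) t ∧
      HasDerivAt (deriv fun s => a * s - primitiveFromZero (primitiveFromZero F) s) (-F t) t := by
  have hfirst : ∀ s ∈ Ioo 0 η,
      HasDerivAt (fun s => a * s - primitiveFromZero (primitiveFromZero F) s)
        (a - primitiveFromZero F s) s := fun s hs =>
    (hasDerivAt_const_mul a).sub <|
      hasDerivAt_primitiveFromZero (by linarith : -1 < r + 1)
        ((continuousOn_primitiveFromZero hr hF hFC).mono Ioo_subset_Icc_self)
        (fun x hx => abs_primitiveFromZero_le hr hFC (Ioo_subset_Icc_self hx)) hs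
  refine ⟨hfirst t ht, ?_⟩
  have hsecond := ((hasDerivAt_primitiveFromZero hr hF hFC ht).const_sub a)
  refine hsecond.congr_of_eventuallyEq ?_
  filter_upwards [isOpen_Ioo.mem_nhds ht] with s hs
  exact (hfirst s hs).deriv

end DoublePrimitive

section FixedPoint

variable {X : Type*} [TopologicalSpace X] {s : Set X}

theorem eqOn_of_abs_sub_le_mul (hs : IsCompact s) {w w' : X → ℝ} (hw : ContinuousOn w s)
    (hw' : ContinuousOn w' s) {k : ℝ} (hk : k < 1)
    (hcontr : ∀ D, (∀ x ∈ s, |w x - w' x| ≤ D) → ∀ x ∈ s, |w x - w' x| ≤ k * D) :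
    EqOn w w' s := by
  intro x hx
  obtain ⟨x₀, hx₀, hmax⟩ := hs.exists_isMaxOn ⟨x, hx⟩ (hw.sub hw').abs
  have hle : ∀ y ∈ s, |w y - w' y| ≤ |w x₀ - w' x₀| := fun y hy => hmax hy
  have hD0 : |w x₀ - w' x₀| ≤ 0 := by
    nlinarith [hcontr _ hle x₀ hx₀, abs_nonneg (w x₀ - w' x₀)]
  exact sub_eq_zero.1 (abs_nonpos_iff.1 ((hle x hx).trans hD0))

theorem exists_eqOn_of_abs_sub_le_mul (hs : IsCompact s) {c ρ k : ℝ} (hρ : 0 ≤ ρ) (hk0 : 0 ≤ k)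
    (hk : k < 1) (T : (X → ℝ) → X → ℝ)
    (hmaps : ∀ w, ContinuousOn w s → (∀ x ∈ s, |w x - c| ≤ ρ) →
      ContinuousOn (T w) s ∧ ∀ x ∈ s, |T w x - c| ≤ ρ)
    (hcontr : ∀ w w', ContinuousOn w s → ContinuousOn w' s → (∀ x ∈ s, |w x - c| ≤ ρ) →
      (∀ x ∈ s, |w' x - c| ≤ ρ) → ∀ D, (∀ x ∈ s, |w x - w' x| ≤ D) →
      ∀ x ∈ s, |T w x - T w' x| ≤ k * D) :
    ∃ w, ContinuousOn w s ∧ (∀ x ∈ s, |w x - c| ≤ ρ) ∧ EqOn (T w) w s := by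
  have := isCompact_iff_compactSpace.mp hs
  set B := Metric.closedBall (ContinuousMap.const s c) ρ
  have : CompleteSpace B := Metric.isClosed_closedBall.completeSpace_coe
  have : Nonempty B := ⟨⟨_, Metric.mem_closedBall_self hρ⟩⟩
  classical
  let extend : C(s, ℝ) → X → ℝ := fun W x => if hx : x ∈ s then W ⟨x, hx⟩ else c
  have extend_mem : ∀ (W : C(s, ℝ)) (x : X) (hx : x ∈ s), extend W x = W ⟨x, hx⟩ :=
    fun W x hx => dif_pos hx
  have extend_cont : ∀ W : C(s, ℝ), ContinuousOn (extend W) s := fun W => by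
    rw [continuousOn_iff_continuous_domRestrict]
    convert W.continuous using 1
    ext ⟨x, hx⟩
    exact extend_mem W x hx
  have extend_ball : ∀ W ∈ B, ∀ x ∈ s, |extend W x - c| ≤ ρ := fun W hW x hx => by
    rw [extend_mem W x hx]
    exact (ContinuousMap.dist_apply_le_dist ⟨x, hx⟩).trans (Metric.mem_closedBall.1 hW)
  let Φ : B → B := fun W =>
    ⟨⟨s.domRestrict (T (extend W)),
      ((hmaps _ (extend_cont W) (extend_ball W W.2)).1).domRestrict⟩, by
      rw [Metric.mem_closedBall, ContinuousMap.dist_le hρ]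
      exact fun x => (hmaps _ (extend_cont W) (extend_ball W W.2)).2 x x.2⟩
  have hΦ : ContractingWith ⟨k, hk0⟩ Φ := by
    refine ⟨hk, LipschitzWith.of_dist_le_mul fun W W' => ?_⟩
    rw [Subtype.dist_eq, ContinuousMap.dist_le (by positivity)]
    refine fun x => hcontr _ _ (extend_cont W) (extend_cont W') (extend_ball W W.2)
      (extend_ball W' W'.2) _ (fun y hy => ?_) x x.2
    rw [extend_mem W y hy, extend_mem W' y hy]
    exact ContinuousMap.dist_apply_le_dist (f := (W : C(s, ℝ))) ⟨y, hy⟩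
  set W₀ := ContractingWith.fixedPoint Φ hΦ
  refine ⟨extend W₀, extend_cont W₀, extend_ball W₀ W₀.2, fun x hx => ?_⟩
  have hfix := congrArg (fun W : B => (W : C(s, ℝ)) ⟨x, hx⟩) hΦ.fixedPoint_isFixedPt
  rw [extend_mem W₀ x hx]
  exact hfix

end FixedPoint

theorem abs_rpow_sub_rpow_le_of_nonpos {m y z p : ℝ} (hp : p ≤ 0) (hm : 0 < m) (hy : m ≤ y)
    (hz : m ≤ z) : |y ^ p - z ^ p| ≤ -p * m ^ (p - 1) * |y - z| := by
  have hderiv : ∀ x ∈ Ici m, HasDerivAt (fun x : ℝ => x ^ p) (p * x ^ (p - 1)) x :=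
    fun x hx => Real.hasDerivAt_rpow_const (Or.inl (hm.trans_le hx).ne')
  have hbound : ∀ x ∈ Ici m, ‖p * x ^ (p - 1)‖ ≤ -p * m ^ (p - 1) := fun x hx => by
    rw [Real.norm_eq_abs, abs_mul, abs_of_nonpos hp,
      abs_of_pos (rpow_pos_of_pos (hm.trans_le hx) _)]
    exact mul_le_mul_of_nonneg_left (rpow_le_rpow_of_nonpos hm hx (by linarith)) (by linarith)
  simpa [Real.norm_eq_abs] using (convex_Ici m).norm_image_sub_le_of_norm_hasDerivWithin_le
    (fun x hx => (hderiv x hx).hasDerivWithinAt) hbound hz hy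

noncomputable def singularIntegrand (h g₁ : ℝ → ℝ) (q : ℝ) (w : ℝ → ℝ) (x : ℝ) : ℝ :=
  h x * ((x * w x) ^ (-q) + g₁ (x * w x))

section SingularIntegrand

variable {h g₁ w w' : ℝ → ℝ} {q a c γ ε x : ℝ} {L : NNReal}

theorem mul_mem_Icc_of_abs_sub_le {u : ℝ} (ha : 0 < a) (hx : x ∈ Ioo 0 ε) (hu : |u - a| ≤ a / 2) :
    x * u ∈ Icc 0 (3 * a / 2 * ε) := by
  obtain ⟨hu₁, hu₂⟩ := abs_le.1 hu
  constructor <;> nlinarith [hx.1, hx.2]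

theorem abs_singularIntegrand_le (hq : 0 ≤ q) (ha : 0 < a) (hε : ε ≤ 1)
    (hh : ∀ x ∈ Ioo 0 ε, |h x| ≤ c * x ^ γ)
    (hg : LipschitzOnWith L g₁ (Icc 0 (3 * a / 2 * ε))) (hg0 : g₁ 0 = 0)
    (hw : ∀ x ∈ Ioo 0 ε, |w x - a| ≤ a / 2) (hx : x ∈ Ioo 0 ε) :
    |singularIntegrand h g₁ q w x| ≤ c * ((a / 2) ^ (-q) + L * (3 * a / 2)) * x ^ (γ - q) := by
  obtain ⟨hw₁, hw₂⟩ := abs_le.1 (hw x hx)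
  have hx0 := hx.1
  have hmem := mul_mem_Icc_of_abs_sub_le ha hx (hw x hx)
  have hpow : (x * w x) ^ (-q) ≤ (a / 2) ^ (-q) * x ^ (-q) := by
    rw [mul_comm, ← mul_rpow (by positivity) hx0.le, mul_comm]
    exact rpow_le_rpow_of_nonpos (by positivity) (by nlinarith) (by linarith)
  have hg1 : |g₁ (x * w x)| ≤ L * (3 * a / 2) * x ^ (-q) := by
    have := hg.dist_le_mul _ hmem 0 ⟨le_rfl, hmem.1.trans hmem.2⟩
    rw [Real.dist_eq, Real.dist_eq, hg0, sub_zero, sub_zero, abs_of_nonneg hmem.1] at this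
    calc |g₁ (x * w x)| ≤ L * (x * w x) := this
      _ ≤ L * (3 * a / 2 * x) := mul_le_mul_of_nonneg_left (by nlinarith) L.2
      _ = L * (3 * a / 2) * x := by ring
      _ ≤ L * (3 * a / 2) * x ^ (-q) := by
          gcongr; exact self_le_rpow_of_le_one hx0.le (hx.2.le.trans hε) (by linarith)
  have hsum : |(x * w x) ^ (-q) + g₁ (x * w x)| ≤
      ((a / 2) ^ (-q) + L * (3 * a / 2)) * x ^ (-q) := by
    calc _ ≤ (x * w x) ^ (-q) + |g₁ (x * w x)| := by
          refine (abs_add_le _ _).trans ?_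
          rw [abs_of_nonneg (rpow_nonneg hmem.1 _)]
      _ ≤ _ := by linarith
  rw [singularIntegrand, abs_mul, sub_eq_add_neg, rpow_add hx0]
  calc |h x| * |(x * w x) ^ (-q) + g₁ (x * w x)|
      ≤ c * x ^ γ * (((a / 2) ^ (-q) + L * (3 * a / 2)) * x ^ (-q)) :=
        mul_le_mul (hh x hx) hsum (abs_nonneg _) ((abs_nonneg _).trans (hh x hx))
    _ = _ := by ring

theorem abs_singularIntegrand_sub_le (hq : 0 ≤ q) (ha : 0 < a) (hε : ε ≤ 1)
    (hh : ∀ x ∈ Ioo 0 ε, |h x| ≤ c * x ^ γ) (hg : LipschitzOnWith L g₁ (Icc 0 (3 * a / 2 * ε)))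
    (hw : ∀ x ∈ Ioo 0 ε, |w x - a| ≤ a / 2) (hw' : ∀ x ∈ Ioo 0 ε, |w' x - a| ≤ a / 2)
    (hx : x ∈ Ioo 0 ε) :
    |singularIntegrand h g₁ q w x - singularIntegrand h g₁ q w' x| ≤
      c * (q * (a / 2) ^ (-q - 1) + L) * x ^ (γ - q) * |w x - w' x| := by
  have hx0 := hx.1
  have hdiff : |x * w x - x * w' x| = x * |w x - w' x| := by
    rw [← mul_sub, abs_mul, abs_of_pos hx0]
  have hself : x ≤ x ^ (-q) := self_le_rpow_of_le_one hx0.le (hx.2.le.trans hε) (by linarith)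
  have hpow : |(x * w x) ^ (-q) - (x * w' x) ^ (-q)| ≤
      q * (a / 2) ^ (-q - 1) * x ^ (-q) * |w x - w' x| := by
    have hlo : ∀ u, |u - a| ≤ a / 2 → x * (a / 2) ≤ x * u := fun u hu =>
      mul_le_mul_of_nonneg_left (by linarith [abs_le.1 hu]) hx0.le
    have := abs_rpow_sub_rpow_le_of_nonpos (p := -q) (by linarith) (by positivity) (hlo _ (hw x hx))
      (hlo _ (hw' x hx))
    rw [neg_neg, hdiff, mul_rpow (y := a / 2) hx0.le (by positivity)] at this
    calc _ ≤ _ := this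
      _ = q * (a / 2) ^ (-q - 1) * (x ^ (-q - 1) * x) * |w x - w' x| := by ring
      _ = _ := by rw [← rpow_add_one hx0.ne', sub_add_cancel]
  have hg1 : |g₁ (x * w x) - g₁ (x * w' x)| ≤ L * x ^ (-q) * |w x - w' x| := by
    have := hg.dist_le_mul _ (mul_mem_Icc_of_abs_sub_le ha hx (hw x hx)) _
      (mul_mem_Icc_of_abs_sub_le ha hx (hw' x hx))
    rw [Real.dist_eq, Real.dist_eq, hdiff] at this
    calc _ ≤ _ := this
      _ ≤ _ := by rw [mul_assoc]; gcongr
  have hsum : |((x * w x) ^ (-q) + g₁ (x * w x)) - ((x * w' x) ^ (-q) + g₁ (x * w' x))| ≤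
      (q * (a / 2) ^ (-q - 1) + L) * x ^ (-q) * |w x - w' x| := by
    rw [add_sub_add_comm]
    refine (abs_add_le _ _).trans ?_
    linarith
  rw [singularIntegrand, singularIntegrand, ← mul_sub, abs_mul, sub_eq_add_neg γ, rpow_add hx0]
  calc _ ≤ c * x ^ γ * ((q * (a / 2) ^ (-q - 1) + L) * x ^ (-q) * |w x - w' x|) :=
        mul_le_mul (hh x hx) hsum (abs_nonneg _) ((abs_nonneg _).trans (hh x hx))
    _ = _ := by ring

theorem continuousOn_singularIntegrand (ha : 0 < a) (hh : ContinuousOn h (Ioo 0 ε))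
    (hg : LipschitzOnWith L g₁ (Icc 0 (3 * a / 2 * ε))) (hwc : ContinuousOn w (Ioo 0 ε))
    (hw : ∀ x ∈ Ioo 0 ε, |w x - a| ≤ a / 2) :
    ContinuousOn (singularIntegrand h g₁ q w) (Ioo 0 ε) := by
  have hy : ContinuousOn (fun x => x * w x) (Ioo 0 ε) := continuousOn_id.mul hwc
  refine hh.mul ((hy.rpow_const fun x hx => Or.inl ?_).add
    (hg.continuousOn.comp hy fun x hx => mul_mem_Icc_of_abs_sub_le ha hx (hw x hx)))
  have := abs_le.1 (hw x hx)
  exact (mul_pos hx.1 (by linarith)).ne'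

end SingularIntegrand

/-- The coefficient of the radial equation after the change of variables `t = r ^ (2 - N)`. -/
noncomputable def kelvinWeight (N : ℝ) (K : ℝ → ℝ) (t : ℝ) : ℝ :=
  t ^ (2 * (N - 1) / (2 - N)) * K (t ^ (1 / (2 - N))) / (N - 2) ^ 2

section KelvinWeight

variable {N R : ℝ} {K : ℝ → ℝ} {t : ℝ}

theorem le_rpow_one_div_two_sub (hN : 2 < N) (hR : 0 < R) (ht : t ∈ Ioc 0 (R ^ (2 - N))) :
    R ≤ t ^ (1 / (2 - N)) := by
  calc R = (R ^ (2 - N)) ^ (1 / (2 - N)) := by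
        rw [← rpow_mul hR.le, mul_one_div_cancel (by linarith), rpow_one]
    _ ≤ t ^ (1 / (2 - N)) :=
        rpow_le_rpow_of_nonpos ht.1 ht.2 (div_nonpos_of_nonneg_of_nonpos zero_le_one (by linarith))

theorem abs_kelvinWeight_le {K₁ α : ℝ} (hN : 2 < N) (hR : 0 < R)
    (hKpos : ∀ r, R ≤ r → 0 < K r) (hKub : ∀ r, R ≤ r → K r ≤ K₁ * r ^ (-α))
    (ht : t ∈ Ioc 0 (R ^ (2 - N))) :
    |kelvinWeight N K t| ≤ K₁ / (N - 2) ^ 2 * t ^ ((α - 2 * (N - 1)) / (N - 2)) := by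
  have hr := le_rpow_one_div_two_sub hN hR ht
  have ht0 := ht.1
  have hN₁ : 2 - N ≠ 0 := by linarith
  have hN₂ : N - 2 ≠ 0 := by linarith
  have hexp : (t ^ (1 / (2 - N))) ^ (-α) = t ^ (α / (N - 2)) := by
    rw [← rpow_mul ht0.le]
    congr 1
    field_simp
    ring
  have hsum : t ^ (2 * (N - 1) / (2 - N)) * t ^ (α / (N - 2)) =
      t ^ ((α - 2 * (N - 1)) / (N - 2)) := by
    rw [← rpow_add ht0]
    congr 1
    field_simp
    ring
  rw [kelvinWeight, abs_of_pos (by have := hKpos _ hr; positivity)]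
  calc t ^ (2 * (N - 1) / (2 - N)) * K (t ^ (1 / (2 - N))) / (N - 2) ^ 2
      ≤ t ^ (2 * (N - 1) / (2 - N)) * (K₁ * t ^ (α / (N - 2))) / (N - 2) ^ 2 := by
        rw [← hexp]; gcongr; exact hKub _ hr
    _ = _ := by rw [← hsum]; ring

theorem continuousOn_kelvinWeight (hN : 2 < N) (hR : 0 < R) (hK : ∀ r, R ≤ r → ContinuousAt K r) :
    ContinuousOn (kelvinWeight N K) (Ioc 0 (R ^ (2 - N))) := fun t ht => by
  have hpow : ∀ p : ℝ, ContinuousAt (fun t : ℝ => t ^ p) t :=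
    fun p => continuousAt_rpow_const _ _ (Or.inl ht.1.ne')
  exact (((hpow _).mul ((hK _ (le_rpow_one_div_two_sub hN hR ht)).comp
    (f := fun t : ℝ => t ^ (1 / (2 - N))) (hpow _))).div_const
    _).continuousWithinAt

theorem neg_one_lt_div_sub_of_add_mul_lt {α q : ℝ} (hN : 2 < N) (hα : N + q * (N - 2) < α) :
    -1 < (α - 2 * (N - 1)) / (N - 2) - q := by
  have : q - 1 < (α - 2 * (N - 1)) / (N - 2) := by
    rw [lt_div_iff₀ (by linarith)]
    linarith
  linarith

end KelvinWeight

noncomputable def singularIntegralOperator (h g₁ : ℝ → ℝ) (q a : ℝ) (w : ℝ → ℝ) (t : ℝ) : ℝ :=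
  a - averagedDoublePrimitive (singularIntegrand h g₁ q w) t

/-- Conditions on `ε` making `singularIntegralOperator h g₁ q a` a `1/2`-contraction of the ball
`|w - a| ≤ a / 2` in `C([0, ε])`. -/
structure IsAdmissibleRadius (h g₁ : ℝ → ℝ) (q a c γ : ℝ) (L : NNReal) (ε : ℝ) : Prop where
  le_one : ε ≤ 1
  abs_weight_le : ∀ x ∈ Ioo 0 ε, |h x| ≤ c * x ^ γ
  continuousOn_weight : ContinuousOn h (Ioo 0 ε)
  lipschitzOnWith : LipschitzOnWith L g₁ (Icc 0 (3 * a / 2 * ε))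
  bound_le : c * ((a / 2) ^ (-q) + L * (3 * a / 2)) / ((γ - q + 1) * (γ - q + 2)) *
    ε ^ (γ - q + 1) ≤ a / 2
  lipschitz_le : c * (q * (a / 2) ^ (-q - 1) + L) / ((γ - q + 1) * (γ - q + 2)) *
    ε ^ (γ - q + 1) ≤ 1 / 2

section SingularIntegralOperator

variable {h g₁ w w' : ℝ → ℝ} {q a c γ ε D t : ℝ} {L : NNReal}

theorem singularIntegralOperator_zero : singularIntegralOperator h g₁ q a w 0 = a := by
  simp [singularIntegralOperator, averagedDoublePrimitive]

theorem exists_isAdmissibleRadius (ha : 0 < a) (hr : -1 < γ - q) {ρ r₀ : ℝ} (hρ : 0 < ρ)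
    (hr₀ : 0 < r₀) (hh : ∀ x ∈ Ioc 0 ρ, |h x| ≤ c * x ^ γ) (hhc : ContinuousOn h (Ioc 0 ρ))
    (hg : LipschitzOnWith L g₁ (Metric.ball 0 r₀)) :
    ∃ δ > 0, ∀ ε ∈ Ioo 0 δ, ε ≤ ρ ∧ IsAdmissibleRadius h g₁ q a c γ L ε := by
  have hsmall : ∀ {φ : ℝ → ℝ} {b : ℝ}, Continuous φ → φ 0 = 0 → 0 < b → ∀ᶠ ε in 𝓝 0, φ ε < b :=
    fun hφ hφ0 hb => (hφ.tendsto' 0 0 hφ0).eventually_lt_const hb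
  have hpow : ∀ C : ℝ, Continuous fun ε : ℝ => C * ε ^ (γ - q + 1) :=
    fun C => continuous_const.mul (continuous_rpow_const (by linarith))
  have hpow0 : ∀ C : ℝ, C * (0 : ℝ) ^ (γ - q + 1) = 0 :=
    fun C => by rw [zero_rpow (by linarith), mul_zero]
  obtain ⟨δ, hδ, hP⟩ := Metric.eventually_nhds_iff.1 <| (eventually_lt_nhds hρ).and <|
    (eventually_lt_nhds one_pos).and <|
    (hsmall (continuous_const_mul (3 * a / 2)) (mul_zero _) hr₀).and <|
    (hsmall (hpow _) (hpow0 _) (half_pos ha)).and (hsmall (hpow _) (hpow0 _) one_half_pos)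
  refine ⟨δ, hδ, fun ε hε => ?_⟩
  obtain ⟨hερ, hε1, hεr₀, hb, hl⟩ :=
    @hP ε (by rw [Real.dist_eq, sub_zero, abs_of_pos hε.1]; exact hε.2)
  refine ⟨hερ.le, hε1.le, fun x hx => hh x ⟨hx.1, hx.2.le.trans hερ.le⟩,
    hhc.mono fun x hx => ⟨hx.1, hx.2.le.trans hερ.le⟩, hg.mono fun y hy => ?_, hb.le, hl.le⟩
  rw [mem_ball_zero_iff, Real.norm_eq_abs, abs_of_nonneg hy.1]
  exact hy.2.trans_lt hεr₀

theorem IsAdmissibleRadius.continuousOn_singularIntegrand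
    (hε : IsAdmissibleRadius h g₁ q a c γ L ε) (ha : 0 < a) (hwc : ContinuousOn w (Icc 0 ε))
    (hw : ∀ x ∈ Icc 0 ε, |w x - a| ≤ a / 2) :
    ContinuousOn (singularIntegrand h g₁ q w) (Ioo 0 ε) :=
  _root_.continuousOn_singularIntegrand ha hε.continuousOn_weight hε.lipschitzOnWith
    (hwc.mono Ioo_subset_Icc_self) fun x hx => hw x (Ioo_subset_Icc_self hx)

theorem IsAdmissibleRadius.abs_singularIntegrand_le (hε : IsAdmissibleRadius h g₁ q a c γ L ε)
    (hq : 0 ≤ q) (ha : 0 < a) (hg0 : g₁ 0 = 0) (hw : ∀ x ∈ Icc 0 ε, |w x - a| ≤ a / 2)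
    (hx : x ∈ Ioo 0 ε) :
    |singularIntegrand h g₁ q w x| ≤ c * ((a / 2) ^ (-q) + L * (3 * a / 2)) * x ^ (γ - q) :=
  _root_.abs_singularIntegrand_le hq ha hε.le_one hε.abs_weight_le hε.lipschitzOnWith hg0
    (fun x hx => hw x (Ioo_subset_Icc_self hx)) hx

theorem singularIntegralOperator_mapsTo (hq : 0 ≤ q) (ha : 0 < a) (hc : 0 ≤ c)
    (hr : -1 < γ - q) (hg0 : g₁ 0 = 0) (hε : IsAdmissibleRadius h g₁ q a c γ L ε)
    (hwc : ContinuousOn w (Icc 0 ε)) (hw : ∀ x ∈ Icc 0 ε, |w x - a| ≤ a / 2) :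
    ContinuousOn (singularIntegralOperator h g₁ q a w) (Icc 0 ε) ∧
      ∀ t ∈ Icc 0 ε, |singularIntegralOperator h g₁ q a w t - a| ≤ a / 2 := by
  have hGC := fun x (hx : x ∈ Ioo 0 ε) => hε.abs_singularIntegrand_le hq ha hg0 hw hx
  refine ⟨continuousOn_const.sub (continuousOn_averagedDoublePrimitive hr
    (hε.continuousOn_singularIntegrand ha hwc hw) hGC), fun t ht => ?_⟩
  rw [singularIntegralOperator, sub_sub_cancel_left, abs_neg]
  refine (abs_averagedDoublePrimitive_le hr hGC ht).trans (le_trans ?_ hε.bound_le)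
  have : 0 < γ - q + 1 := by linarith
  have : 0 < γ - q + 2 := by linarith
  exact mul_le_mul_of_nonneg_left (rpow_le_rpow ht.1 ht.2 (by linarith)) (by positivity)

theorem abs_singularIntegralOperator_sub_le (hq : 0 ≤ q) (ha : 0 < a) (hc : 0 ≤ c)
    (hr : -1 < γ - q) (hg0 : g₁ 0 = 0) (hε : IsAdmissibleRadius h g₁ q a c γ L ε)
    (hwc : ContinuousOn w (Icc 0 ε)) (hw'c : ContinuousOn w' (Icc 0 ε))
    (hw : ∀ x ∈ Icc 0 ε, |w x - a| ≤ a / 2) (hw' : ∀ x ∈ Icc 0 ε, |w' x - a| ≤ a / 2)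
    (hD : ∀ x ∈ Icc 0 ε, |w x - w' x| ≤ D) (ht : t ∈ Icc 0 ε) :
    |singularIntegralOperator h g₁ q a w t - singularIntegralOperator h g₁ q a w' t| ≤
      1 / 2 * D := by
  have hdiff : ∀ x ∈ Ioo 0 ε, |singularIntegrand h g₁ q w x - singularIntegrand h g₁ q w' x| ≤
      c * (q * (a / 2) ^ (-q - 1) + L) * D * x ^ (γ - q) := fun x hx => by
    refine (abs_singularIntegrand_sub_le hq ha hε.le_one hε.abs_weight_le hε.lipschitzOnWith
      (fun y hy => hw y (Ioo_subset_Icc_self hy)) (fun y hy => hw' y (Ioo_subset_Icc_self hy))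
      hx).trans ?_
    rw [mul_right_comm _ D]
    exact mul_le_mul_of_nonneg_left (hD x (Ioo_subset_Icc_self hx))
      (mul_nonneg (by positivity) (rpow_nonneg hx.1.le _))
  have hD0 : 0 ≤ D := (abs_nonneg _).trans (hD t ht)
  rw [singularIntegralOperator, singularIntegralOperator, sub_sub_sub_cancel_left, abs_sub_comm,
    averagedDoublePrimitive_sub hr (hε.continuousOn_singularIntegrand ha hwc hw)
      (fun x hx => hε.abs_singularIntegrand_le hq ha hg0 hw hx)
      (hε.continuousOn_singularIntegrand ha hw'c hw')
      (fun x hx => hε.abs_singularIntegrand_le hq ha hg0 hw' hx) ht.2]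
  refine (abs_averagedDoublePrimitive_le hr hdiff ht).trans ?_
  have : 0 < γ - q + 1 := by linarith
  have : 0 < γ - q + 2 := by linarith
  calc c * (q * (a / 2) ^ (-q - 1) + L) * D / ((γ - q + 1) * (γ - q + 2)) * t ^ (γ - q + 1)
      ≤ c * (q * (a / 2) ^ (-q - 1) + L) / ((γ - q + 1) * (γ - q + 2)) * ε ^ (γ - q + 1) * D := by
        rw [mul_div_right_comm, mul_right_comm _ D]
        exact mul_le_mul_of_nonneg_right (mul_le_mul_of_nonneg_left
          (rpow_le_rpow ht.1 ht.2 (by linarith)) (by positivity)) hD0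
    _ ≤ 1 / 2 * D := mul_le_mul_of_nonneg_right hε.lipschitz_le hD0

theorem exists_eqOn_singularIntegralOperator (hq : 0 ≤ q) (ha : 0 < a) (hc : 0 ≤ c)
    (hr : -1 < γ - q) (hg0 : g₁ 0 = 0) (hε : IsAdmissibleRadius h g₁ q a c γ L ε) :
    ∃ w, ContinuousOn w (Icc 0 ε) ∧ (∀ x ∈ Icc 0 ε, |w x - a| ≤ a / 2) ∧
      EqOn (singularIntegralOperator h g₁ q a w) w (Icc 0 ε) :=
  exists_eqOn_of_abs_sub_le_mul isCompact_Icc (by positivity) (by norm_num) (by norm_num) _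
    (fun _ => singularIntegralOperator_mapsTo hq ha hc hr hg0 hε)
    (fun _ _ hwc hw'c hw hw' _ hD _ ht =>
      abs_singularIntegralOperator_sub_le hq ha hc hr hg0 hε hwc hw'c hw hw' hD ht)

theorem eqOn_of_eqOn_singularIntegralOperator (hq : 0 ≤ q) (ha : 0 < a) (hc : 0 ≤ c)
    (hr : -1 < γ - q) (hg0 : g₁ 0 = 0) (hε : IsAdmissibleRadius h g₁ q a c γ L ε)
    (hwc : ContinuousOn w (Icc 0 ε)) (hw : ∀ x ∈ Icc 0 ε, |w x - a| ≤ a / 2)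
    (hfix : EqOn (singularIntegralOperator h g₁ q a w) w (Icc 0 ε))
    (hw'c : ContinuousOn w' (Icc 0 ε)) (hw' : ∀ x ∈ Icc 0 ε, |w' x - a| ≤ a / 2)
    (hfix' : EqOn (singularIntegralOperator h g₁ q a w') w' (Icc 0 ε)) :
    EqOn w w' (Icc 0 ε) :=
  eqOn_of_abs_sub_le_mul isCompact_Icc hwc hw'c (by norm_num : (1 / 2 : ℝ) < 1)
    fun _ hD t ht => by
      rw [← hfix ht, ← hfix' ht]
      exact abs_singularIntegralOperator_sub_le hq ha hc hr hg0 hε hwc hw'c hw hw' hD ht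

theorem IsAdmissibleRadius.hasDerivAt_linear_sub_primitiveFromZero_primitiveFromZero
    (hε : IsAdmissibleRadius h g₁ q a c γ L ε) (hq : 0 ≤ q) (ha : 0 < a) (hr : -1 < γ - q)
    (hg0 : g₁ 0 = 0) (hwc : ContinuousOn w (Icc 0 ε))
    (hw : ∀ x ∈ Icc 0 ε, |w x - a| ≤ a / 2) (ht : t ∈ Ioo 0 ε) :
    HasDerivAt
        (fun s => a * s - primitiveFromZero (primitiveFromZero (singularIntegrand h g₁ q w)) s)
        (a - primitiveFromZero (singularIntegrand h g₁ q w) t) t ∧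
      HasDerivAt (deriv fun s =>
        a * s - primitiveFromZero (primitiveFromZero (singularIntegrand h g₁ q w)) s)
        (-singularIntegrand h g₁ q w t) t :=
  _root_.hasDerivAt_linear_sub_primitiveFromZero_primitiveFromZero a hr
    (hε.continuousOn_singularIntegrand ha hwc hw)
    (fun _ hx => hε.abs_singularIntegrand_le hq ha hg0 hw hx) ht

end SingularIntegralOperator

theorem mul_sub_primitiveFromZero_primitiveFromZero_eq {F w : ℝ → ℝ} {a t : ℝ}
    (hw : w t = a - averagedDoublePrimitive F t) :
    a * t - primitiveFromZero (primitiveFromZero F) t = t * w t := by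
  rcases eq_or_ne t 0 with rfl | ht
  · simp [primitiveFromZero]
  · rw [hw, averagedDoublePrimitive]
    field_simp

theorem tendsto_div_nhdsGT_zero_of_eqOn_mul {v w : ℝ → ℝ} {ε : ℝ} (hε : 0 < ε)
    (hw : ContinuousWithinAt w (Icc 0 ε) 0) (hvw : EqOn v (fun t => t * w t) (Icc 0 ε)) :
    Tendsto (fun t => v t / t) (𝓝[>] 0) (𝓝 (w 0)) := by
  refine (hw.tendsto.mono_left (nhdsWithin_le_of_mem
    (mem_of_superset (Ioo_mem_nhdsGT hε) Ioo_subset_Icc_self))).congr' ?_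
  filter_upwards [Ioo_mem_nhdsGT hε] with t ht
  rw [hvw (Ioo_subset_Icc_self ht), mul_div_cancel_left₀ _ ht.1.ne']

theorem div_abs_rpow_add_one {u q : ℝ} (hu : 0 < u) : u / |u| ^ (q + 1) = u ^ (-q) := by
  rw [abs_of_pos hu, rpow_add hu, rpow_one, rpow_neg hu.le]
  field_simp

theorem stmt_6_general
    (N : ℕ) (hN : 2 < N)
    (R R₁ : ℝ) (hR : 0 < R) (hR₁ : R₁ = R ^ ((2 : ℝ) - N))
    (f g₁ : ℝ → ℝ) (q : ℝ) (hq0 : 0 < q)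
    (hH2 : ∀ u : ℝ, u ≠ 0 → f u = u / |u| ^ (q + 1) + g₁ u)
    (hg1lip : LocallyLipschitz g₁) (hg10 : g₁ 0 = 0)
    (K : ℝ → ℝ) (K₁ α : ℝ) (hK₁ : 0 < K₁)
    (hα₁ : (N : ℝ) + q * ((N : ℝ) - 2) < α)
    (hKpos : ∀ r : ℝ, R ≤ r → 0 < K r)
    (hKdiff : ∀ r : ℝ, R ≤ r → DifferentiableAt ℝ K r)
    (hKub : ∀ r : ℝ, R ≤ r → K r ≤ K₁ * r ^ (-α))
    (h : ℝ → ℝ)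
    (hh : ∀ t : ℝ, t ∈ Ioc (0 : ℝ) R₁ →
      h t = t ^ (2 * ((N : ℝ) - 1) / (2 - (N : ℝ))) * K (t ^ (1 / (2 - (N : ℝ)))) / ((N : ℝ) - 2) ^ 2)
    :
    ∀ a : ℝ, 0 < a → ∃ ε₀ : ℝ, 0 < ε₀ ∧ ε₀ ≤ R₁ ∧ ∃ vv : ℝ → ℝ,
      ContinuousOn vv (Icc 0 ε₀) ∧ vv 0 = 0 ∧
      Tendsto (fun t => vv t / t) (nhdsWithin 0 (Ioi 0)) (nhds a) ∧
      (∀ t ∈ Ioc (0 : ℝ) ε₀, DifferentiableAt ℝ vv t ∧ DifferentiableAt ℝ (deriv vv) t ∧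
        deriv (deriv vv) t + h t * f (vv t) = 0) ∧
      (∀ t ∈ Icc (0 : ℝ) ε₀, a / 2 * t ≤ vv t ∧ vv t ≤ 3 * a / 2 * t) ∧
      ∃ w : ℝ → ℝ,
        (ContinuousOn w (Icc 0 ε₀) ∧ w 0 = a ∧
        (∀ t ∈ Icc (0 : ℝ) ε₀, |w t - a| ≤ a / 2) ∧
        (∀ t ∈ Ioc (0 : ℝ) ε₀, w t = a - (1 / t) *
          ∫ s in Ioo (0 : ℝ) t, ∫ x in Ioo (0 : ℝ) s,
            h x * ((x * w x) ^ (-q) + g₁ (x * w x)))) ∧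
        (∀ w' : ℝ → ℝ,
          (ContinuousOn w' (Icc 0 ε₀) ∧ w' 0 = a ∧
            (∀ t ∈ Icc (0 : ℝ) ε₀, |w' t - a| ≤ a / 2) ∧
            (∀ t ∈ Ioc (0 : ℝ) ε₀, w' t = a - (1 / t) *
              ∫ s in Ioo (0 : ℝ) t, ∫ x in Ioo (0 : ℝ) s,
                h x * ((x * w' x) ^ (-q) + g₁ (x * w' x)))) →
          ∀ t ∈ Icc (0 : ℝ) ε₀, w' t = w t) ∧
        (∀ t ∈ Icc (0 : ℝ) ε₀, vv t = t * w t) := by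
  intro a ha
  have hN' : (2 : ℝ) < N := by exact_mod_cast hN
  subst hR₁
  have hr := neg_one_lt_div_sub_of_add_mul_lt hN' hα₁
  have hc : 0 ≤ K₁ / ((N : ℝ) - 2) ^ 2 := by positivity
  obtain ⟨L, U, hU, hgU⟩ := hg1lip 0
  obtain ⟨r₀, hr₀, hball⟩ := Metric.mem_nhds_iff.1 hU
  obtain ⟨δ, hδ, hadm⟩ := exists_isAdmissibleRadius (q := q) ha hr (rpow_pos_of_pos hR _) hr₀
    (fun x hx => by rw [hh x hx]; exact abs_kelvinWeight_le hN' hR hKpos hKub hx)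
    ((continuousOn_kelvinWeight hN' hR fun r hr => (hKdiff r hr).continuousAt).congr hh)
    (hgU.mono hball)
  -- `w` is built on `[0, δ / 2]` so that `v` is twice differentiable up to the endpoint `δ / 4`.
  obtain ⟨-, hε₁⟩ := hadm (δ / 2) ⟨by positivity, by linarith⟩
  obtain ⟨hε₀R, hε₀⟩ := hadm (δ / 4) ⟨by positivity, by linarith⟩
  obtain ⟨w, hwc, hw, hfix⟩ := exists_eqOn_singularIntegralOperator hq0.le ha hc hr hg10 hε₁
  have hsub : Icc 0 (δ / 4) ⊆ Icc 0 (δ / 2) := Icc_subset_Icc_right (by linarith)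
  set v := fun s => a * s - primitiveFromZero (primitiveFromZero (singularIntegrand h g₁ q w)) s
  have hvw : EqOn v (fun t => t * w t) (Icc 0 (δ / 2)) :=
    fun t ht => mul_sub_primitiveFromZero_primitiveFromZero_eq (hfix ht).symm
  have hw0 : w 0 = a :=
    (hfix (left_mem_Icc.2 (by positivity))).symm.trans singularIntegralOperator_zero
  refine ⟨δ / 4, by positivity, hε₀R, v, ?_, by simpa using hvw (left_mem_Icc.2 (by positivity)),
    ?_, fun t ht => ?_, fun t ht => ?_, w, ⟨hwc.mono hsub, hw0, fun t ht => hw t (hsub ht),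
    fun t ht => (hfix (hsub (Ioc_subset_Icc_self ht))).symm⟩, ?_, fun t ht => hvw (hsub ht)⟩
  · exact ((continuousOn_id.mul hwc).congr hvw).mono hsub
  · exact hw0 ▸ tendsto_div_nhdsGT_zero_of_eqOn_mul (by positivity)
      (hwc 0 (left_mem_Icc.2 (by positivity))) hvw
  · obtain ⟨hv', hv''⟩ := hε₁.hasDerivAt_linear_sub_primitiveFromZero_primitiveFromZero
      hq0.le ha hr hg10 hwc hw ⟨ht.1, ht.2.trans_lt (by linarith)⟩
    have hvt := hvw (hsub (Ioc_subset_Icc_self ht))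
    have hpos : 0 < v t := by
      rw [hvt]
      exact mul_pos ht.1 (by linarith [(abs_le.1 (hw t (hsub (Ioc_subset_Icc_self ht)))).1])
    refine ⟨hv'.differentiableAt, hv''.differentiableAt, ?_⟩
    rw [hv''.deriv, hH2 _ hpos.ne', div_abs_rpow_add_one hpos, hvt, singularIntegrand]
    ring
  · rw [hvw (hsub ht)]
    obtain ⟨h₁, h₂⟩ := abs_le.1 (hw t (hsub ht))
    constructor <;> nlinarith [ht.1]
  · rintro w' ⟨hw'c, hw'0, hw', hfix'⟩ t ht
    refine (eqOn_of_eqOn_singularIntegralOperator hq0.le ha hc hr hg10 hε₀ (hwc.mono hsub)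
      (fun x hx => hw x (hsub hx)) (hfix.mono hsub) hw'c hw' (fun x hx => ?_) ht).symm
    rcases hx.1.eq_or_lt with rfl | hx0
    · rw [singularIntegralOperator_zero, hw'0]
    · exact (hfix' x ⟨hx0, hx.2⟩).symm

theorem stmt_6
    (N : ℕ) (hN : 2 < N)
    (R R₁ : ℝ) (hR : 0 < R) (hR₁ : R₁ = R ^ ((2 : ℝ) - N))
    (f g g₁ : ℝ → ℝ) (p q : ℝ) (hp : 1 < p) (hq0 : 0 < q) (hq1 : q < 1)
    (hodd : ∀ u : ℝ, f (-u) = - f u)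
    (hfloclip : ∀ x : ℝ, x ≠ 0 → ∃ ε > (0 : ℝ), ∃ L : NNReal, LipschitzOnWith L f (Metric.ball x ε))
    (hH1 : ∀ u : ℝ, u ≠ 0 → f u = |u| ^ (p - 1) * u + g u)
    (hglim : ∀ ε : ℝ, 0 < ε → ∃ M : ℝ, 0 < M ∧ ∀ u : ℝ, M ≤ |u| → |g u / |u| ^ p| ≤ ε)
    (hH2 : ∀ u : ℝ, u ≠ 0 → f u = u / |u| ^ (q + 1) + g₁ u)
    (hg1lip : LocallyLipschitz g₁) (hg10 : g₁ 0 = 0)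
    (hfpos : ∀ w : ℝ, 0 < w → 0 < f w)
    (K : ℝ → ℝ) (K₀ K₁ α : ℝ) (hK₀ : 0 < K₀) (hK₁ : 0 < K₁)
    (hα₁ : (N : ℝ) + q * ((N : ℝ) - 2) < α) (hα₂ : α < 2 * ((N : ℝ) - 1))
    (hKpos : ∀ r : ℝ, R ≤ r → 0 < K r)
    (hKdiff : ∀ r : ℝ, R ≤ r → DifferentiableAt ℝ K r)
    (hK'cont : ContinuousOn (deriv K) (Ici R))
    (hKlb : ∀ r : ℝ, R ≤ r → K₀ * r ^ (-α) ≤ K r)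
    (hKub : ∀ r : ℝ, R ≤ r → K r ≤ K₁ * r ^ (-α))
    (hKratio : ∀ r : ℝ, R ≤ r → -(r * deriv K r / K r) < 2 * ((N : ℝ) - 1))
    (hKlim : Tendsto (fun r => r * deriv K r / K r) atTop (nhds (-α)))
    (h : ℝ → ℝ)
    (hh : ∀ t : ℝ, t ∈ Ioc (0 : ℝ) R₁ →
      h t = t ^ (2 * ((N : ℝ) - 1) / (2 - (N : ℝ))) * K (t ^ (1 / (2 - (N : ℝ)))) / ((N : ℝ) - 2) ^ 2)
    :
    ∀ a : ℝ, 0 < a → ∃ ε₀ : ℝ, 0 < ε₀ ∧ ε₀ ≤ R₁ ∧ ∃ vv : ℝ → ℝ,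
      ContinuousOn vv (Icc 0 ε₀) ∧ vv 0 = 0 ∧
      Tendsto (fun t => vv t / t) (nhdsWithin 0 (Ioi 0)) (nhds a) ∧
      (∀ t ∈ Ioc (0 : ℝ) ε₀, DifferentiableAt ℝ vv t ∧ DifferentiableAt ℝ (deriv vv) t ∧
        deriv (deriv vv) t + h t * f (vv t) = 0) ∧
      (∀ t ∈ Icc (0 : ℝ) ε₀, a / 2 * t ≤ vv t ∧ vv t ≤ 3 * a / 2 * t) ∧
      ∃ w : ℝ → ℝ,
        (ContinuousOn w (Icc 0 ε₀) ∧ w 0 = a ∧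
        (∀ t ∈ Icc (0 : ℝ) ε₀, |w t - a| ≤ a / 2) ∧
        (∀ t ∈ Ioc (0 : ℝ) ε₀, w t = a - (1 / t) *
          ∫ s in Ioo (0 : ℝ) t, ∫ x in Ioo (0 : ℝ) s,
            h x * ((x * w x) ^ (-q) + g₁ (x * w x)))) ∧
        (∀ w' : ℝ → ℝ,
          (ContinuousOn w' (Icc 0 ε₀) ∧ w' 0 = a ∧
            (∀ t ∈ Icc (0 : ℝ) ε₀, |w' t - a| ≤ a / 2) ∧
            (∀ t ∈ Ioc (0 : ℝ) ε₀, w' t = a - (1 / t) *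
              ∫ s in Ioo (0 : ℝ) t, ∫ x in Ioo (0 : ℝ) s,
                h x * ((x * w' x) ^ (-q) + g₁ (x * w' x)))) →
          ∀ t ∈ Icc (0 : ℝ) ε₀, w' t = w t) ∧
        (∀ t ∈ Icc (0 : ℝ) ε₀, vv t = t * w t) :=
  stmt_6_general N hN R R₁ hR hR₁ f g₁ q hq0 hH2 hg1lip hg10 K K₁ α hK₁ hα₁ hKpos hKdiff hKub h hh
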